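/- arXiv:2510.03338 — 2 statements merged into one kernel-verified Lean document; each statement's English description precedes it below -/
import Mathlib

section
/- Let μ ∈ ℝ, σ > 0 and ξ ≠ 0, and let x be in the interior of the support D. Then the negative mixed second partial derivative of log f(x; μ,σ,ξ) with respect to μ and σ equals (1/σ²) · t(x)^{−2} · ( ξ + 1 + ((x−μ)/σ − 1) · t(x)^{−1/ξ} ). -/
open Real

/-- The Generalized Extreme-Value (GEV) density with shape `ξ ≠ 0`. -/
noncomputable def gevDensity (μ σ ξ x : ℝ) : ℝ :=
  if 0 < 1 + ξ * ((x - μ) / σ) then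
    σ⁻¹ * (1 + ξ * ((x - μ) / σ)) ^ (-(ξ + 1) / ξ) *
      Real.exp (-((1 + ξ * ((x - μ) / σ)) ^ (-1 / ξ)))
  else 0

/-!
With `t = 1 + ξ (x - μ) / σ`, on the support `log f = -log σ - (1 + 1/ξ) log t - t^(-1/ξ)`.
Since `∂t/∂μ = -ξ/σ`, the location score is `∂_μ log f = g(t) / σ` with
`g(t) = (ξ + 1 - t^(-1/ξ)) / t`. Differentiating `g(t(σ)) / σ` in `σ` by the chain and quotient
rules, with `∂t/∂σ = -ξ (x - μ) / σ²`, and eliminating `ξ (x - μ) / σ = t - 1` gives the claim.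
-/

open Filter Topology

noncomputable def gevT (μ σ ξ x : ℝ) : ℝ := 1 + ξ * ((x - μ) / σ)

-- `σ · ∂_μ log f` as a function of `t`
noncomputable def gevLocScore (ξ t : ℝ) : ℝ := (ξ + 1 - t ^ (-1 / ξ)) / t

section

variable {μ σ ξ x : ℝ}

lemma hasDerivAt_gevT_loc : HasDerivAt (fun m => gevT m σ ξ x) (-ξ / σ) μ := by
  unfold gevT
  refine ((((hasDerivAt_id μ).const_sub x).div_const σ).const_mul ξ |>.const_add 1).congr_deriv
    ?_
  ring

lemma hasDerivAt_gevT_scale (hσ : σ ≠ 0) :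
    HasDerivAt (fun s => gevT μ s ξ x) (-ξ * ((x - μ) / σ) / σ) σ := by
  unfold gevT
  simp only [div_eq_mul_inv]
  refine (((hasDerivAt_inv hσ).const_mul (x - μ)).const_mul ξ |>.const_add 1).congr_deriv ?_
  ring

lemma log_gevDensity (hσ : σ ≠ 0) (ht : 0 < gevT μ σ ξ x) :
    log (gevDensity μ σ ξ x) =
      -log σ + -(ξ + 1) / ξ * log (gevT μ σ ξ x) - gevT μ σ ξ x ^ (-1 / ξ) := by
  unfold gevDensity gevT at *
  rw [if_pos ht, log_mul (by positivity) (exp_ne_zero _), log_mul (by positivity) (by positivity),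
    log_exp, log_inv, log_rpow ht]
  ring

lemma hasDerivAt_log_gevDensity_loc (hσ : σ ≠ 0) (hξ : ξ ≠ 0) (ht : 0 < gevT μ σ ξ x) :
    HasDerivAt (fun m => log (gevDensity m σ ξ x)) (gevLocScore ξ (gevT μ σ ξ x) / σ) μ := by
  have hT := hasDerivAt_gevT_loc (μ := μ) (σ := σ) (ξ := ξ) (x := x)
  have hlog := ((hT.log ht.ne').const_mul (-(ξ + 1) / ξ)).const_add (-log σ) |>.sub
    (hT.rpow_const (p := -1 / ξ) (Or.inl ht.ne'))
  have hsupp : ∀ᶠ m in 𝓝 μ, 0 < gevT m σ ξ x :=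
    hT.continuousAt.eventually (lt_mem_nhds ht)
  refine (hlog.congr_of_eventuallyEq ?_).congr_deriv ?_
  · filter_upwards [hsupp] with m hm
    exact log_gevDensity hσ hm
  · rw [gevLocScore, rpow_sub_one ht.ne']
    field_simp

lemma hasDerivAt_gevLocScore (hξ : ξ ≠ 0) {t : ℝ} (ht : t ≠ 0) :
    HasDerivAt (gevLocScore ξ) ((ξ + 1) * (t ^ (-1 / ξ) / ξ - 1) / t ^ 2) t := by
  have hpow := hasDerivAt_rpow_const (p := -1 / ξ) (Or.inl ht)
  refine (((hasDerivAt_const t (ξ + 1)).sub hpow).div (hasDerivAt_id t) ht).congr_deriv ?_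
  simp only [Pi.sub_apply, id]
  rw [rpow_sub_one ht]
  field_simp
  ring

end

/-- The negative mixed second partial derivative of `log f(x; μ,σ,ξ)` with respect to `μ`
and `σ` equals `(1/σ²) t(x)⁻² (ξ + 1 + ((x-μ)/σ - 1) t(x)^{-1/ξ})`: i.e. the derivative in
`σ` of `s ↦ ∂/∂μ log f(x; μ,s,ξ)` equals the negative of that quantity. -/
theorem stmt_6 (μ σ ξ x : ℝ) (hσ : 0 < σ) (hξ : ξ ≠ 0)
    (hx : 0 < 1 + ξ * ((x - μ) / σ)) :
    HasDerivAt (fun s : ℝ => deriv (fun m : ℝ => Real.log (gevDensity m s ξ x)) μ)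
      (-((1 / σ ^ 2) * ((1 + ξ * ((x - μ) / σ))⁻¹) ^ 2 *
        (ξ + 1 + ((x - μ) / σ - 1) * (1 + ξ * ((x - μ) / σ)) ^ (-1 / ξ)))) σ := by
  have hσ0 := hσ.ne'
  have hx' : 0 < gevT μ σ ξ x := hx
  have hscore : (fun s => deriv (fun m => log (gevDensity m s ξ x)) μ) =ᶠ[𝓝 σ]
      fun s => gevLocScore ξ (gevT μ s ξ x) / s := by
    filter_upwards [eventually_ne_nhds hσ0,
      (hasDerivAt_gevT_scale hσ0).continuousAt.eventually (lt_mem_nhds hx')] with s hs ht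
    exact (hasDerivAt_log_gevDensity_loc hs hξ ht).deriv
  have hcomp := (hasDerivAt_gevLocScore hξ hx'.ne').comp σ (hasDerivAt_gevT_scale hσ0)
  have hd := hcomp.fun_div (hasDerivAt_id' σ) hσ0
  refine (hd.congr_of_eventuallyEq hscore).congr_deriv ?_
  simp only [Function.comp_apply, gevLocScore, gevT]
  generalize (x - μ) / σ = z at hx ⊢
  generalize (1 + ξ * z) ^ (-1 / ξ) = P
  field_simp
  ring
end

section
/- Let μ ∈ ℝ, σ > 0 and ξ > 0. Then the limit as x → +∞ of x^{(ξ+1)/ξ} · f(x; μ,σ,ξ) equals σ^{1/ξ} · ξ^{−(ξ+1)/ξ} (the GEV density with positive shape has a regularly varying right tail of index −(ξ+1)/ξ). -/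
open Real Filter

/-! With `t = gevArg μ σ ξ` affine of slope `ξ / σ`, on the support
`x^{(ξ+1)/ξ} f(x) = σ⁻¹ (x / t(x))^{(ξ+1)/ξ} exp(-t(x)^{-1/ξ})`, and as `x → ∞` the ratio `x / t(x)`
tends to `σ / ξ` while `t(x) → ∞` sends the exponential factor to `1`. -/

open Topology

theorem tendsto_div_mul_add_atTop {a : ℝ} (ha : a ≠ 0) (b : ℝ) :
    Tendsto (fun x : ℝ => x / (a * x + b)) atTop (𝓝 a⁻¹) := by
  have hquot : Tendsto (fun x : ℝ => a + b * x⁻¹) atTop (𝓝 a) := by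
    simpa using (tendsto_inv_atTop_zero.const_mul b).const_add a
  refine (hquot.inv₀ ha).congr' ?_
  filter_upwards [eventually_gt_atTop 0] with x hx
  field_simp

theorem tendsto_exp_neg_rpow_neg_atTop {p : ℝ} (hp : 0 < p) :
    Tendsto (fun t : ℝ => exp (-t ^ (-p))) atTop (𝓝 1) := by
  simpa using (tendsto_rpow_neg_atTop hp).neg.rexp

noncomputable def gevArg (μ σ ξ x : ℝ) : ℝ := 1 + ξ * ((x - μ) / σ)

section

variable {μ σ ξ : ℝ}

theorem gevArg_eq_mul_add (hσ : σ ≠ 0) (x : ℝ) :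
    gevArg μ σ ξ x = ξ / σ * x + (1 - ξ * μ / σ) := by
  unfold gevArg
  field_simp
  ring

theorem tendsto_gevArg_atTop (hσ : 0 < σ) (hξ : 0 < ξ) :
    Tendsto (gevArg μ σ ξ) atTop atTop := by
  simp only [funext (gevArg_eq_mul_add hσ.ne')]
  exact tendsto_atTop_add_const_right _ _ (tendsto_id.const_mul_atTop (div_pos hξ hσ))

theorem rpow_mul_gevDensity_eq {x : ℝ} (hx : 0 ≤ x) (ht : 0 < gevArg μ σ ξ x) :
    x ^ ((ξ + 1) / ξ) * gevDensity μ σ ξ x =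
      σ⁻¹ * (x / gevArg μ σ ξ x) ^ ((ξ + 1) / ξ) * exp (-gevArg μ σ ξ x ^ (-1 / ξ)) := by
  rw [show gevDensity μ σ ξ x = _ from if_pos ht, ← gevArg, Real.div_rpow hx ht.le, neg_div,
    Real.rpow_neg ht.le]
  ring

theorem gev_tail_constant_eq (hσ : 0 < σ) (hξ : 0 < ξ) :
    σ⁻¹ * (σ / ξ) ^ ((ξ + 1) / ξ) = σ ^ (1 / ξ) * ξ ^ (-(ξ + 1) / ξ) := by
  have hexp : (ξ + 1) / ξ = 1 / ξ + 1 := by field_simp; ring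
  rw [Real.div_rpow hσ.le hξ.le, neg_div, Real.rpow_neg hξ.le, hexp,
    Real.rpow_add_one hσ.ne']
  field_simp

end

/-- For `ξ > 0`, the GEV density has a regularly varying right tail of index `-(ξ+1)/ξ`:
`x^{(ξ+1)/ξ} f(x; μ,σ,ξ) → σ^{1/ξ} ξ^{-(ξ+1)/ξ}` as `x → +∞`. -/
theorem stmt_18 (μ σ ξ : ℝ) (hσ : 0 < σ) (hξ : 0 < ξ) :
    Tendsto (fun x : ℝ => x ^ ((ξ + 1) / ξ) * gevDensity μ σ ξ x) atTop
      (nhds (σ ^ (1 / ξ) * ξ ^ (-(ξ + 1) / ξ))) := by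
  have ht := tendsto_gevArg_atTop (μ := μ) hσ hξ
  have hratio : Tendsto (fun x => x / gevArg μ σ ξ x) atTop (𝓝 (σ / ξ)) := by
    simpa [funext (gevArg_eq_mul_add (μ := μ) (ξ := ξ) hσ.ne')] using
      tendsto_div_mul_add_atTop (div_ne_zero hξ.ne' hσ.ne') (1 - ξ * μ / σ)
  have hexp : Tendsto (fun x => exp (-gevArg μ σ ξ x ^ (-1 / ξ))) atTop (𝓝 1) := by
    simpa [neg_div, Function.comp_def] using
      (tendsto_exp_neg_rpow_neg_atTop (one_div_pos.2 hξ)).comp ht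
  have hlim :=
    ((hratio.rpow_const (p := (ξ + 1) / ξ) (Or.inl (div_pos hσ hξ).ne')).const_mul σ⁻¹).mul hexp
  rw [mul_one, gev_tail_constant_eq hσ hξ] at hlim
  refine hlim.congr' ?_
  filter_upwards [ht.eventually (eventually_gt_atTop 0), eventually_ge_atTop 0] with x htx hx
  exact (rpow_mul_gevDensity_eq hx htx).symm
end
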